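/- arXiv:0707.0090 — 2 statements merged into one kernel-verified Lean document; each statement's English description precedes it below -/
import Mathlib

section
/- Let r > s ≥ 1, let a(Z) = Σ_{i≥0} a_i Z^i ∈ k[[Z]] with a_0 ≠ 0, and suppose Z = Z(T') ∈ T'·k[[T']] of order 1 and b(T') = Σ b_i T'^i solve the system a(Z) = −(T'/Z)^{r−s}, b(T') = −(T'/Z)^r. Then b_s = (r/(r−s))·a_s. -/
open PowerSeries

/-- Composition `a(Z)` of a power series `a` with a power series `Z` of positive order. -/
noncomputable def compPS {k : Type*} [CommRing k] (a Z : PowerSeries k) : PowerSeries k :=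
  PowerSeries.mk fun n => ∑ m ∈ Finset.range (n + 1),
    (PowerSeries.coeff m a) * (PowerSeries.coeff n (Z ^ m))

/-- Let `r > s ≥ 1`, `a(Z) = ∑ a_i Z^i` with `a_0 ≠ 0`, and suppose `Z = Z(T')` is a power
series of order `1` in `T'` and `b(T') = ∑ b_i T'^i` solve the system
`a(Z) = −(T'/Z)^{r−s}`, `b(T') = −(T'/Z)^r` (written with denominators cleared as
`a(Z)·Z^{r−s} = −T'^{r−s}` and `b·Z^r = −T'^r`).  Then `b_s = (r/(r−s))·a_s`. -/
theorem coeff_s_of_fourier_infty_zero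
    {k : Type*} [Field k] [CharZero k] [IsAlgClosed k] (r s : ℕ) (hs : 1 ≤ s) (hrs : s < r)
    (a : PowerSeries k) (ha : PowerSeries.coeff 0 a ≠ 0)
    (Z : PowerSeries k) (hZ0 : PowerSeries.coeff 0 Z = 0) (hZ1 : PowerSeries.coeff 1 Z ≠ 0)
    (b : PowerSeries k)
    (heq1 : compPS a Z * Z ^ (r - s) = -(PowerSeries.X ^ (r - s)))
    (heq2 : b * Z ^ r = -(PowerSeries.X ^ r)) :
    PowerSeries.coeff s b = ((r : k) / ((r : k) - (s : k))) * PowerSeries.coeff s a := by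
  classical
  set m := r - s with hmdef
  have hm1 : 1 ≤ m := by omega
  set A := compPS a Z with hAdef
  -- write Z = X * ψ
  set ψ : PowerSeries k := PowerSeries.mk (fun n => PowerSeries.coeff (n + 1) Z) with hψdef
  have hZψ : Z = X * ψ := by
    ext n
    cases n with
    | zero => simp [hZ0]
    | succ n => rw [coeff_succ_X_mul, hψdef, coeff_mk]
  have hψ0 : constantCoeff ψ ≠ 0 := by
    have h1 : coeff 0 ψ = coeff 1 Z := by rw [hψdef, coeff_mk]
    rw [← coeff_zero_eq_constantCoeff_apply, h1]
    exact hZ1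
  set θ : PowerSeries k := ψ⁻¹ with hθdef
  have hψθ : ψ * θ = 1 := PowerSeries.mul_inv_cancel ψ hψ0
  have hψθpow : ∀ n : ℕ, ψ ^ n * θ ^ n = 1 := fun n => by rw [← mul_pow, hψθ, one_pow]
  have hXne : (X : PowerSeries k) ≠ 0 := X_ne_zero
  -- b = -θ^r
  have hbψ : b * ψ ^ r = -1 := by
    have h : X ^ r * (b * ψ ^ r) = X ^ r * (-1) := by
      rw [hZψ] at heq2
      linear_combination heq2
    exact mul_left_cancel₀ (pow_ne_zero r hXne) h
  have hb : b = -θ ^ r := by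
    calc b = b * (ψ ^ r * θ ^ r) := by rw [hψθpow, mul_one]
    _ = b * ψ ^ r * θ ^ r := by ring
    _ = -θ ^ r := by rw [hbψ]; ring
  -- A = -θ^m
  have hAψ : A * ψ ^ m = -1 := by
    have h : X ^ m * (A * ψ ^ m) = X ^ m * (-1) := by
      rw [hZψ] at heq1
      linear_combination heq1
    exact mul_left_cancel₀ (pow_ne_zero m hXne) h
  have hA : A = -θ ^ m := by
    calc A = A * (ψ ^ m * θ ^ m) := by rw [hψθpow, mul_one]
    _ = A * ψ ^ m * θ ^ m := by ring
    _ = -θ ^ m := by rw [hAψ]; ring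
  -- derivative facts
  have hDθ : d⁄dX k θ = -θ ^ 2 * d⁄dX k ψ := by
    rw [hθdef]
    exact derivative_inv' ψ
  have hcoeffXD : ∀ (g : PowerSeries k) (t : ℕ),
      coeff t (X * d⁄dX k g) = (t : k) * coeff t g := by
    intro g t
    cases t with
    | zero => simp
    | succ t =>
      rw [coeff_succ_X_mul, coeff_derivative]
      push_cast
      ring
  have hkey : ∀ u : ℕ, 1 ≤ u →
      (u : PowerSeries k) * (θ ^ (u + 1) * (ψ + X * d⁄dX k ψ))
        = (u : PowerSeries k) * θ ^ u - X * d⁄dX k (θ ^ u) := by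
    intro u hu
    obtain ⟨w, rfl⟩ : ∃ w, u = w + 1 := ⟨u - 1, by omega⟩
    rw [Derivation.leibniz_pow]
    simp only [smul_eq_mul, nsmul_eq_mul, Nat.add_sub_cancel]
    rw [hDθ]
    push_cast
    linear_combination (((w : PowerSeries k) + 1) * θ ^ (w + 1)) * hψθ
  have hc : ∀ u t : ℕ, 1 ≤ u →
      (u : k) * coeff t (θ ^ (u + 1) * (ψ + X * d⁄dX k ψ))
        = ((u : k) - (t : k)) * coeff t (θ ^ u) := by
    intro u t hu
    have h := congrArg (coeff t) (hkey u hu)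
    rw [← map_natCast (C) u, map_sub, coeff_C_mul, coeff_C_mul, hcoeffXD] at h
    linear_combination h
  have hdelta : ∀ t : ℕ,
      coeff t (θ ^ (t + 1) * (ψ + X * d⁄dX k ψ)) = if t = 0 then (1 : k) else 0 := by
    intro t
    by_cases ht : t = 0
    · subst ht
      rw [if_pos rfl]
      have h1 : θ ^ (0 + 1) * (ψ + X * d⁄dX k ψ) = 1 + X * (d⁄dX k ψ * θ) := by
        linear_combination hψθ
      rw [h1, map_add]
      simp
    · rw [if_neg ht]
      have h := hc t t (by omega)
      rw [sub_self, zero_mul] at h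
      have htk : (t : k) ≠ 0 := Nat.cast_ne_zero.mpr ht
      exact (mul_eq_zero.mp h).resolve_left htk
  -- vanishing of low coefficients of Z^mm
  have hZcoeff : ∀ mm n : ℕ, n < mm → coeff n (Z ^ mm) = 0 := by
    intro mm n h
    rw [hZψ, mul_pow, coeff_X_pow_mul', if_neg (by omega)]
  -- truncation P of the composition
  set P : PowerSeries k := ∑ mm ∈ Finset.range (s + 1), C (coeff mm a) * Z ^ mm with hPdef
  have hdvd : X ^ (s + 1) ∣ A - P := by
    rw [X_pow_dvd_iff]
    intro n hn
    have hnle : n + 1 ≤ s + 1 := by omega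
    rw [map_sub, hAdef, hPdef]
    simp only [compPS, coeff_mk, map_sum, coeff_C_mul]
    rw [Finset.sum_subset (Finset.range_subset_range.mpr hnle), sub_self]
    intro x hx hx2
    rw [hZcoeff x n (by simp at hx hx2 ⊢; omega), mul_zero]
  obtain ⟨Rm, hRm⟩ := hdvd
  have hAQ : coeff s (A * (θ ^ (s + 1) * (ψ + X * d⁄dX k ψ)))
      = coeff s (P * (θ ^ (s + 1) * (ψ + X * d⁄dX k ψ))) := by
    have hsplit : A * (θ ^ (s + 1) * (ψ + X * d⁄dX k ψ))
        = P * (θ ^ (s + 1) * (ψ + X * d⁄dX k ψ))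
          + X ^ (s + 1) * (Rm * (θ ^ (s + 1) * (ψ + X * d⁄dX k ψ))) := by
      linear_combination (θ ^ (s + 1) * (ψ + X * d⁄dX k ψ)) * hRm
    rw [hsplit, map_add, coeff_X_pow_mul', if_neg (by omega), add_zero]
  have hPQ : coeff s (P * (θ ^ (s + 1) * (ψ + X * d⁄dX k ψ))) = coeff s a := by
    rw [hPdef, Finset.sum_mul, map_sum]
    have hterm : ∀ mm ∈ Finset.range (s + 1),
        coeff s (C (coeff mm a) * Z ^ mm * (θ ^ (s + 1) * (ψ + X * d⁄dX k ψ)))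
          = if mm = s then coeff s a else 0 := by
      intro mm hmm
      have hms : mm ≤ s := by simp at hmm; omega
      rw [mul_assoc, coeff_C_mul]
      have hZQ : Z ^ mm * (θ ^ (s + 1) * (ψ + X * d⁄dX k ψ))
          = X ^ mm * (θ ^ ((s - mm) + 1) * (ψ + X * d⁄dX k ψ)) := by
        rw [hZψ, mul_pow]
        have h2 : θ ^ (s + 1) = θ ^ mm * θ ^ ((s - mm) + 1) := by
          rw [← pow_add]
          congr 1
          omega
        calc X ^ mm * ψ ^ mm * (θ ^ (s + 1) * (ψ + X * d⁄dX k ψ))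
            = (ψ ^ mm * θ ^ mm) * (X ^ mm * (θ ^ ((s - mm) + 1) * (ψ + X * d⁄dX k ψ))) := by
              rw [h2]; ring
        _ = X ^ mm * (θ ^ ((s - mm) + 1) * (ψ + X * d⁄dX k ψ)) := by
              rw [hψθpow, one_mul]
      rw [hZQ, coeff_X_pow_mul', if_pos hms, hdelta (s - mm)]
      by_cases h : mm = s
      · subst h
        simp
      · rw [if_neg (by omega), mul_zero, if_neg h]
    rw [Finset.sum_congr rfl hterm]
    simp
  -- put things together
  have hAQr : A * (θ ^ (s + 1) * (ψ + X * d⁄dX k ψ))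
      = -(θ ^ (r + 1) * (ψ + X * d⁄dX k ψ)) := by
    rw [hA, show r + 1 = m + (s + 1) by omega, pow_add]
    ring
  have hfinal1 : coeff s a = -coeff s (θ ^ (r + 1) * (ψ + X * d⁄dX k ψ)) := by
    rw [← hAQ.trans hPQ, hAQr, map_neg]
  have hfinal2 : (r : k) * coeff s (θ ^ (r + 1) * (ψ + X * d⁄dX k ψ))
      = ((r : k) - (s : k)) * coeff s (θ ^ r) := hc r s (by omega)
  have hbs : coeff s b = -coeff s (θ ^ r) := by rw [hb, map_neg]
  have hrsne : (r : k) - (s : k) ≠ 0 := by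
    have : (r : k) ≠ (s : k) := by
      exact_mod_cast (by omega : r ≠ s)
    exact sub_ne_zero.mpr this
  rw [div_mul_eq_mul_div, eq_div_iff hrsne]
  linear_combination (-(r : k)) * hfinal1 + hfinal2 + ((r : k) - (s : k)) * hbs
end

section
/- Let r, s be positive integers with s > r, let a(Z) = Σ_{i≥0} a_i Z^i ∈ k[[Z]] with a_0 ≠ 0, and suppose Z = Z(Z') ∈ Z'·k[[Z']] of order 1 and b(Z') = Σ b_i Z'^i solve the system a(Z) = −(Z/Z')^{s−r}, b(Z') = (Z'/Z)^r. Then b_s = (r/(s−r))·a_s. -/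
open PowerSeries

lemma aux_deriv {k : Type*} [Field k] (u v : PowerSeries k) (hv : v * u = 1)
    (q : ℕ) (hq : 1 ≤ q) :
    X * d⁄dX k (v ^ q) = (q : PowerSeries k) * (v ^ q - v ^ (q + 1) * d⁄dX k (X * u)) := by
  have hDv0 : v * d⁄dX k u + u * d⁄dX k v = 0 := by
    have := congrArg (d⁄dX k) hv
    simpa [Derivation.leibniz, smul_eq_mul, mul_comm, add_comm] using this
  have hDveq : d⁄dX k v = -(v ^ 2 * d⁄dX k u) := by
    linear_combination v * hDv0 - (d⁄dX k v) * hv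
  have hpow : v ^ (q - 1) * v ^ 2 = v ^ (q + 1) := by
    rw [← pow_add]; congr 1; omega
  rw [Derivation.leibniz_pow, Derivation.leibniz (d⁄dX k) X u, derivative_X, hDveq]
  simp only [smul_eq_mul, nsmul_eq_mul]
  linear_combination (-(q : PowerSeries k) * X * d⁄dX k u) * hpow +
    ((q : PowerSeries k) * v ^ q) * hv

-- the key residue computation: coeff q (DZ * v^(q+1)) = 0 for q ≥ 1, and = 1 for q = 0
lemma aux_res0 {k : Type*} [Field k] [CharZero k] (u v : PowerSeries k) (hv : v * u = 1)
    (q : ℕ) (hq : 1 ≤ q) :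
    (coeff q) (d⁄dX k (X * u) * v ^ (q + 1)) = 0 := by
  have h := congrArg (coeff q) (aux_deriv u v hv q hq)
  obtain ⟨q', rfl⟩ : ∃ q', q = q' + 1 := ⟨q - 1, by omega⟩
  rw [coeff_succ_X_mul, coeff_derivative] at h
  have hcast : ((q' + 1 : ℕ) : PowerSeries k) = C ((q' + 1 : ℕ) : k) := by
    push_cast; simp
  rw [hcast, coeff_C_mul, map_sub] at h
  have hqk : ((q' + 1 : ℕ) : k) ≠ 0 := by exact_mod_cast Nat.succ_ne_zero q'
  have h3 : ((q' + 1 : ℕ) : k) * (coeff (q' + 1)) (v ^ (q' + 1 + 1) * d⁄dX k (X * u)) = 0 := by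
    push_cast at h ⊢; linear_combination h
  rw [mul_comm]
  exact (mul_eq_zero.mp h3).resolve_left hqk

/-- Let `s > r ≥ 1`, `a(Z) = ∑ a_i Z^i` with `a_0 ≠ 0`, and suppose `Z = Z(Z')` is a power
series of order `1` in `Z'` and `b(Z') = ∑ b_i Z'^i` solve the system
`a(Z) = −(Z/Z')^{s−r}`, `b(Z') = (Z'/Z)^r` (written with denominators cleared as
`a(Z)·Z'^{s−r} = −Z^{s−r}` and `b·Z^r = Z'^r`).  Then `b_s = (r/(s−r))·a_s`. -/
theorem coeff_s_of_fourier_infty_infty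
    {k : Type*} [Field k] [CharZero k] [IsAlgClosed k] (r s : ℕ) (hr : 1 ≤ r) (hrs : r < s)
    (a : PowerSeries k) (ha : PowerSeries.coeff 0 a ≠ 0)
    (Z : PowerSeries k) (hZ0 : PowerSeries.coeff 0 Z = 0) (hZ1 : PowerSeries.coeff 1 Z ≠ 0)
    (b : PowerSeries k)
    (heq1 : compPS a Z * PowerSeries.X ^ (s - r) = -(Z ^ (s - r)))
    (heq2 : b * Z ^ r = PowerSeries.X ^ r) :
    PowerSeries.coeff s b = ((r : k) / ((s : k) - (r : k))) * PowerSeries.coeff s a := by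
  classical
  obtain ⟨u, hu⟩ : (X : PowerSeries k) ∣ Z :=
    X_dvd_iff.2 (by rw [← coeff_zero_eq_constantCoeff_apply]; exact hZ0)
  have hu0 : constantCoeff u ≠ 0 := by
    rw [hu, coeff_succ_X_mul 0 u, coeff_zero_eq_constantCoeff_apply] at hZ1
    exact hZ1
  set v : PowerSeries k := u⁻¹ with hvdef
  have hv : v * u = 1 := PowerSeries.inv_mul_cancel u hu0
  have hXne : (X : PowerSeries k) ≠ 0 := X_ne_zero
  have hbu : b * u ^ r = 1 := by
    have h1 : (X : PowerSeries k) ^ r * (b * u ^ r) = (X : PowerSeries k) ^ r * 1 := by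
      rw [mul_one]
      calc (X : PowerSeries k) ^ r * (b * u ^ r) = b * (X * u) ^ r := by ring
        _ = b * Z ^ r := by rw [← hu]
        _ = X ^ r := heq2
    exact mul_left_cancel₀ (pow_ne_zero _ hXne) h1
  have hb : b = v ^ r := by
    calc b = b * (u ^ r * v ^ r) := by
            rw [← mul_pow, show u * v = 1 from by rw [mul_comm]; exact hv, one_pow, mul_one]
    _ = (b * u ^ r) * v ^ r := by ring
    _ = v ^ r := by rw [hbu, one_mul]
  set m : ℕ := s - r with hmdef
  have hm : 1 ≤ m := by omega
  have hA : compPS a Z = -(u ^ m) := by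
    have h1 : (X : PowerSeries k) ^ m * compPS a Z = (X : PowerSeries k) ^ m * (-(u ^ m)) := by
      rw [mul_comm ((X : PowerSeries k) ^ m), heq1, hu]; ring
    exact mul_left_cancel₀ (pow_ne_zero _ hXne) h1
  have hZn : ∀ n : ℕ, Z ^ n = X ^ n * u ^ n := fun n => by rw [hu, mul_pow]
  have huvn : ∀ n j : ℕ, n ≤ j → u ^ n * v ^ (j + 1) = v ^ (j + 1 - n) := by
    intro n j hnj
    have h1 : v ^ (j + 1) = v ^ (j + 1 - n) * v ^ n := by rw [← pow_add]; congr 1; omega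
    rw [h1, mul_comm (u ^ n), mul_assoc, ← mul_pow, hv, one_pow, mul_one]
  -- KEY: residue extraction
  have key : coeff s (compPS a Z * d⁄dX k Z * v ^ (s + 1)) = coeff s a := by
    set P : PowerSeries k := ∑ n ∈ Finset.range (s + 1), C (coeff n a) * Z ^ n with hP
    have hdvd : (X : PowerSeries k) ^ (s + 1) ∣ compPS a Z - P := by
      rw [X_pow_dvd_iff]
      intro j hj
      rw [map_sub]
      have hcj : coeff j (compPS a Z) =
          ∑ n ∈ Finset.range (j + 1), coeff n a * coeff j (Z ^ n) := by
        simp [compPS, coeff_mk]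
      have hPj : coeff j P = ∑ n ∈ Finset.range (s + 1), coeff n a * coeff j (Z ^ n) := by
        rw [hP, map_sum]
        exact Finset.sum_congr rfl fun n _ => by rw [coeff_C_mul]
      rw [hcj, hPj, Finset.sum_subset (Finset.range_subset_range.2 (by omega : j + 1 ≤ s + 1))]
      · exact sub_self _
      · intro n hn hnot
        have hjn : j < n := by
          simp only [Finset.mem_range] at hn hnot; omega
        rw [hZn, coeff_X_pow_mul', if_neg (by omega), mul_zero]
    obtain ⟨R, hR⟩ := hdvd
    have hAeq : compPS a Z = P + X ^ (s + 1) * R := by linear_combination hR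
    rw [hAeq]
    have hexp : (P + X ^ (s + 1) * R) * d⁄dX k Z * v ^ (s + 1) =
        P * d⁄dX k Z * v ^ (s + 1) + X ^ (s + 1) * (R * d⁄dX k Z * v ^ (s + 1)) := by ring
    rw [hexp, map_add, coeff_X_pow_mul', if_neg (by omega), add_zero]
    have hPexp : P * d⁄dX k Z * v ^ (s + 1) =
        ∑ n ∈ Finset.range (s + 1), C (coeff n a) * (Z ^ n * d⁄dX k Z * v ^ (s + 1)) := by
      rw [hP, Finset.sum_mul, Finset.sum_mul]
      exact Finset.sum_congr rfl fun n _ => by ring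
    rw [hPexp, map_sum]
    rw [Finset.sum_eq_single s]
    · -- n = s term equals coeff s a
      rw [coeff_C_mul]
      have hx := huvn s s le_rfl
      rw [show s + 1 - s = 1 by omega, pow_one] at hx
      have h1 : Z ^ s * d⁄dX k Z * v ^ (s + 1) = X ^ s * (d⁄dX k Z * v) := by
        rw [hZn]
        calc X ^ s * u ^ s * d⁄dX k Z * v ^ (s + 1)
            = X ^ s * (d⁄dX k Z * (u ^ s * v ^ (s + 1))) := by ring
          _ = X ^ s * (d⁄dX k Z * v) := by rw [hx]
      rw [h1, coeff_X_pow_mul', if_pos le_rfl, Nat.sub_self]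
      have e3 : constantCoeff (d⁄dX k Z) = constantCoeff u := by
        rw [← coeff_zero_eq_constantCoeff_apply, coeff_derivative, hu, coeff_succ_X_mul,
          coeff_zero_eq_constantCoeff_apply]
        push_cast; ring
      have e2 : constantCoeff v * constantCoeff u = 1 := by
        simpa using congrArg (constantCoeff) hv
      rw [coeff_zero_eq_constantCoeff_apply, map_mul, e3]
      calc coeff s a * (constantCoeff u * constantCoeff v)
          = coeff s a * (constantCoeff v * constantCoeff u) := by ring
        _ = coeff s a := by rw [e2, mul_one]
    · -- n ≠ s terms vanish
      intro n hn hns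
      have hnle : n ≤ s := by simp only [Finset.mem_range] at hn; omega
      have hq : 1 ≤ s - n := by omega
      rw [coeff_C_mul]
      have h1 : Z ^ n * d⁄dX k Z * v ^ (s + 1) = X ^ n * (d⁄dX k Z * v ^ (s + 1 - n)) := by
        rw [hZn]
        calc X ^ n * u ^ n * d⁄dX k Z * v ^ (s + 1)
            = X ^ n * (d⁄dX k Z * (u ^ n * v ^ (s + 1))) := by ring
          _ = X ^ n * (d⁄dX k Z * v ^ (s + 1 - n)) := by rw [huvn n s hnle]
      rw [h1, coeff_X_pow_mul', if_pos (by omega : n ≤ s)]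
      have h2 : d⁄dX k Z * v ^ (s + 1 - n) = d⁄dX k (X * u) * v ^ ((s - n) + 1) := by
        rw [← hu]; congr 2; omega
      rw [h2, aux_res0 u v hv (s - n) hq, mul_zero]
    · intro h; exact absurd (Finset.self_mem_range_succ s) h
  -- final computation
  have huvm : u ^ m * v ^ (s + 1) = v ^ (r + 1) := by
    have := huvn m s (by omega)
    rw [this]; congr 1; omega
  have hkey2 : coeff s (v ^ (r + 1) * d⁄dX k Z) = -(coeff s a) := by
    have h1 : compPS a Z * d⁄dX k Z * v ^ (s + 1) = -(v ^ (r + 1) * d⁄dX k Z) := by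
      rw [hA]
      calc -(u ^ m) * d⁄dX k Z * v ^ (s + 1) = -((u ^ m * v ^ (s + 1)) * d⁄dX k Z) := by ring
        _ = -(v ^ (r + 1) * d⁄dX k Z) := by rw [huvm]
    rw [h1, map_neg] at key
    linear_combination -key
  have hfin := congrArg (coeff s) (aux_deriv u v hv r hr)
  obtain ⟨s', rfl⟩ : ∃ s', s = s' + 1 := ⟨s - 1, by omega⟩
  rw [coeff_succ_X_mul, coeff_derivative] at hfin
  have hcast : ((r : ℕ) : PowerSeries k) = C ((r : ℕ) : k) := by push_cast; simp
  rw [hcast, coeff_C_mul, map_sub] at hfin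
  rw [← hu] at hfin
  rw [hkey2] at hfin
  have hsr : (((s' + 1 : ℕ) : k)) - ((r : ℕ) : k) ≠ 0 := by
    rw [sub_ne_zero]
    exact_mod_cast (by omega : s' + 1 ≠ r)
  rw [hb, div_mul_eq_mul_div, eq_div_iff hsr]
  push_cast at hfin ⊢
  linear_combination hfin
end
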